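/- Let n ≥ 2 and 1 ≤ m ≤ n, and let φ be a phase function satisfying the homogeneous convex conditions as in the context. There exist constants c > 0 and C > 0, depending only on n and on φ, such that the following holds for every K ≥ C. Let α_i = (a_{i,1},…,a_{i,n}) ∈ ℝ^n be linearly independent vectors and a_{i,n+1} ∈ ℝ for i = 1,…,n+1−m, and let L, V⁻ and V be as in the context. Suppose η ∈ L ∩ S^{n−1} satisfies Ang(η, V⁻) < π/2 − K^{−2}. Define γ_i := Hess φ(η) α_i, let Ṽ := span{γ_1,…,γ_{n+1−m}} ⊂ ℝ^n, let V̄⁻ be the orthogonal complement of Ṽ in ℝ^n, let V̄ := V̄⁻ ⊕ ℝ e_{n+1} ⊂ ℝ^{n+1}, and let W be the orthogonal complement of V̄ in ℝ^{n+1}. Then V and W are quantitatively transversal: Ang(V, W) ≥ c K^{−4}. (Lemma 4.6: transversal case for general cones.) -/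

import Mathlib

open MeasureTheory Real RealInnerProductSpace

noncomputable section

/-- The angle between two vectors of a real inner product space. -/
def ang {E : Type*} [NormedAddCommGroup E] [InnerProductSpace ℝ E] (v w : E) : ℝ :=
  Real.arccos (⟪v, w⟫ / (‖v‖ * ‖w‖))

/-- The angle between a vector and a set: infimum of the angles to the nonzero
elements of the set. -/
def angInf {E : Type*} [NormedAddCommGroup E] [InnerProductSpace ℝ E]
    (ξ : E) (S : Set E) : ℝ :=
  sInf {θ : ℝ | ∃ v ∈ S, v ≠ 0 ∧ θ = ang ξ v}

end

/-- The homogeneous convex conditions on a phase function `φ`. -/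
def HomogConvex (n : ℕ) (φ : EuclideanSpace ℝ (Fin n) → ℝ) : Prop :=
  ContDiffOn ℝ (⊤ : ℕ∞) φ {ξ : EuclideanSpace ℝ (Fin n) | ξ ≠ 0} ∧
  (∀ l : ℝ, 0 < l → ∀ ξ, φ (l • ξ) = l * φ ξ) ∧
  (∀ ξ : EuclideanSpace ℝ (Fin n), ‖ξ‖ = 1 →
    ∀ v : EuclideanSpace ℝ (Fin n), ⟪ξ, v⟫ = 0 →
      (1 / 2) * ‖v‖ ^ 2 ≤ iteratedFDeriv ℝ 2 φ ξ ![v, v] ∧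
      iteratedFDeriv ℝ 2 φ ξ ![v, v] ≤ 2 * ‖v‖ ^ 2)

namespace GCTaux

variable {n : ℕ} {φ : EuclideanSpace ℝ (Fin n) → ℝ}

lemma homog_contDiffAt (hφ : HomogConvex n φ) {ξ : EuclideanSpace ℝ (Fin n)} (hξ : ξ ≠ 0) :
    ContDiffAt ℝ (⊤ : ℕ∞) φ ξ :=
  hφ.1.contDiffAt (isOpen_ne.mem_nhds hξ)

lemma gradient_eq_comp :
    gradient φ = ⇑(InnerProductSpace.toDual ℝ (EuclideanSpace ℝ (Fin n))).symm ∘ fderiv ℝ φ :=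
  funext fun _ => rfl

lemma gradient_contDiffAt (hφ : HomogConvex n φ) {ξ : EuclideanSpace ℝ (Fin n)} (hξ : ξ ≠ 0) :
    ContDiffAt ℝ 1 (gradient φ) ξ := by
  have h1 : ContDiffAt ℝ 1 (fderiv ℝ φ) ξ :=
    (homog_contDiffAt hφ hξ).fderiv_right (m := 1) (WithTop.coe_le_coe.mpr le_top)
  rw [gradient_eq_comp]
  exact (((InnerProductSpace.toDual ℝ (EuclideanSpace ℝ (Fin n))).symm.contDiff).contDiffAt.of_le
    le_rfl).comp ξ h1

lemma fderiv_gradient_inner (hφ : HomogConvex n φ) {ξ : EuclideanSpace ℝ (Fin n)} (hξ : ξ ≠ 0)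
    (u x : EuclideanSpace ℝ (Fin n)) :
    ⟪fderiv ℝ (gradient φ) ξ u, x⟫ = fderiv ℝ (fderiv ℝ φ) ξ u x := by
  rw [gradient_eq_comp, LinearIsometryEquiv.comp_fderiv]
  exact InnerProductSpace.toDual_symm_apply

lemma hess_symm (hφ : HomogConvex n φ) {ξ : EuclideanSpace ℝ (Fin n)} (hξ : ξ ≠ 0)
    (u x : EuclideanSpace ℝ (Fin n)) :
    ⟪fderiv ℝ (gradient φ) ξ u, x⟫ = ⟪u, fderiv ℝ (gradient φ) ξ x⟫ := by
  rw [fderiv_gradient_inner hφ hξ, real_inner_comm, fderiv_gradient_inner hφ hξ]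
  exact (homog_contDiffAt hφ hξ).isSymmSndFDerivAt
    (by rw [minSmoothness_of_isRCLikeNormedField]; exact WithTop.coe_le_coe.mpr (le_top (a := (2 : ℕ∞)))) u x

lemma hess_form (hφ : HomogConvex n φ) {ξ : EuclideanSpace ℝ (Fin n)} (hξ1 : ‖ξ‖ = 1)
    (u : EuclideanSpace ℝ (Fin n)) (hu : ⟪ξ, u⟫ = 0) :
    (1 / 2) * ‖u‖ ^ 2 ≤ ⟪fderiv ℝ (gradient φ) ξ u, u⟫ ∧
      ⟪fderiv ℝ (gradient φ) ξ u, u⟫ ≤ 2 * ‖u‖ ^ 2 := by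
  have hξ : ξ ≠ 0 := fun h => by simp [h] at hξ1
  have h2 : iteratedFDeriv ℝ 2 φ ξ ![u, u] = ⟪fderiv ℝ (gradient φ) ξ u, u⟫ := by
    rw [iteratedFDeriv_two_apply, fderiv_gradient_inner hφ hξ]
    norm_num
  have := hφ.2.2 ξ hξ1 u hu
  rw [h2] at this
  exact this

lemma fderiv_homog (hφ : HomogConvex n φ) {ξ : EuclideanSpace ℝ (Fin n)} (hξ : ξ ≠ 0)
    {l : ℝ} (hl : 0 < l) : fderiv ℝ φ (l • ξ) = fderiv ℝ φ ξ := by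
  have hdξ : DifferentiableAt ℝ φ ξ :=
    (homog_contDiffAt hφ hξ).differentiableAt (by simp)
  have hdl : DifferentiableAt ℝ φ (l • ξ) :=
    (homog_contDiffAt hφ (smul_ne_zero hl.ne' hξ)).differentiableAt (by simp)
  have h1 : (fun x : EuclideanSpace ℝ (Fin n) => φ (l • x)) = fun x => l * φ x :=
    funext fun x => hφ.2.1 l hl x
  have hA : HasFDerivAt (fun x : EuclideanSpace ℝ (Fin n) => l • x)
      (l • ContinuousLinearMap.id ℝ (EuclideanSpace ℝ (Fin n))) ξ := by
    exact (l • ContinuousLinearMap.id ℝ (EuclideanSpace ℝ (Fin n))).hasFDerivAt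
  have hcomp : HasFDerivAt (fun x : EuclideanSpace ℝ (Fin n) => φ (l • x))
      ((fderiv ℝ φ (l • ξ)).comp (l • ContinuousLinearMap.id ℝ (EuclideanSpace ℝ (Fin n)))) ξ :=
    HasFDerivAt.comp ξ hdl.hasFDerivAt hA
  have hrhs : HasFDerivAt (fun x : EuclideanSpace ℝ (Fin n) => l * φ x)
      (l • fderiv ℝ φ ξ) ξ := hdξ.hasFDerivAt.const_mul l
  rw [h1] at hcomp
  have heq := hcomp.unique hrhs
  ext y
  have := congrFun (congrArg DFunLike.coe heq) y
  simp only [ContinuousLinearMap.coe_comp', Function.comp_apply,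
    ContinuousLinearMap.smul_apply, ContinuousLinearMap.coe_id', id_eq,
    ContinuousLinearMap.map_smul, smul_eq_mul] at this
  exact mul_left_cancel₀ hl.ne' this

lemma gradient_homog (hφ : HomogConvex n φ) {ξ : EuclideanSpace ℝ (Fin n)} (hξ : ξ ≠ 0)
    {l : ℝ} (hl : 0 < l) : gradient φ (l • ξ) = gradient φ ξ := by
  rw [gradient_eq_comp, Function.comp_apply, Function.comp_apply, fderiv_homog hφ hξ hl]

lemma hess_self (hφ : HomogConvex n φ) {ξ : EuclideanSpace ℝ (Fin n)} (hξ : ξ ≠ 0) :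
    fderiv ℝ (gradient φ) ξ ξ = 0 := by
  have hgd : DifferentiableAt ℝ (gradient φ) ξ :=
    (gradient_contDiffAt hφ hξ).differentiableAt one_ne_zero
  have h₁ : HasDerivAt (fun l : ℝ => l • ξ) ξ 1 := by
    simpa using (hasDerivAt_id (1 : ℝ)).smul_const ξ
  have h₂ : HasFDerivAt (gradient φ) (fderiv ℝ (gradient φ) ξ) ((1 : ℝ) • ξ) := by
    rw [one_smul]; exact hgd.hasFDerivAt
  have hcomp : HasDerivAt (fun l : ℝ => gradient φ (l • ξ)) (fderiv ℝ (gradient φ) ξ ξ) 1 :=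
    by have := h₂.comp_hasDerivAt 1 h₁; exact this
  have heq : (fun l : ℝ => gradient φ (l • ξ)) =ᶠ[nhds (1 : ℝ)]
      (fun _ => gradient φ ξ) := by
    filter_upwards [isOpen_Ioi.mem_nhds (by norm_num : (0 : ℝ) < 1)] with l hl
    exact gradient_homog hφ hξ hl
  have hconst : HasDerivAt (fun l : ℝ => gradient φ (l • ξ)) 0 1 :=
    (hasDerivAt_const (1 : ℝ) (gradient φ ξ)).congr_of_eventuallyEq heq
  exact hcomp.unique hconst

lemma hess_op_bound (hφ : HomogConvex n φ) {ξ : EuclideanSpace ℝ (Fin n)} (hξ1 : ‖ξ‖ = 1)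
    {u : EuclideanSpace ℝ (Fin n)} (hu : ⟪ξ, u⟫ = 0) :
    ‖fderiv ℝ (gradient φ) ξ u‖ ≤ 2 * ‖u‖ := by
  have hξ : ξ ≠ 0 := fun h => by simp [h] at hξ1
  set H := fderiv ℝ (gradient φ) ξ with hH
  have key : ∀ x y : EuclideanSpace ℝ (Fin n), ⟪ξ, x⟫ = 0 → ⟪ξ, y⟫ = 0 →
      ⟪H x, y⟫ ^ 2 ≤ ⟪H x, x⟫ * ⟪H y, y⟫ := by
    intro x y hx hy
    have quad : ∀ t : ℝ, 0 ≤ ⟪H y, y⟫ * (t * t) + (2 * ⟪H x, y⟫) * t + ⟪H x, x⟫ := by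
      intro t
      have h0 : ⟪ξ, x + t • y⟫ = 0 := by
        rw [inner_add_right, real_inner_smul_right, hx, hy]; ring
      have hform := (hess_form hφ hξ1 (x + t • y) h0).1
      have hyx : ⟪H y, x⟫ = ⟪H x, y⟫ := by
        rw [hess_symm hφ hξ y x, real_inner_comm]
      have expand : ⟪H (x + t • y), x + t • y⟫
          = ⟪H y, y⟫ * (t * t) + (2 * ⟪H x, y⟫) * t + ⟪H x, x⟫ := by
        simp only [map_add, ContinuousLinearMap.map_smul, inner_add_left, inner_add_right,
          real_inner_smul_left, real_inner_smul_right]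
        rw [hyx]; ring
      nlinarith [sq_nonneg ‖x + t • y‖, hform]
    have hd := discrim_le_zero (K := ℝ) quad
    rw [discrim] at hd
    nlinarith [hd]
  by_cases h0 : H u = 0
  · rw [h0]; simp
  · have h1 : ⟪ξ, H u⟫ = 0 := by
      rw [real_inner_comm, hess_symm hφ hξ u ξ, hess_self hφ hξ, inner_zero_right]
    have h2 := key u (H u) hu h1
    have h3 := (hess_form hφ hξ1 u hu).2
    have h4 := (hess_form hφ hξ1 (H u) h1).2
    have h3l := (hess_form hφ hξ1 u hu).1
    have h4l := (hess_form hφ hξ1 (H u) h1).1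
    rw [← hH] at h3 h4 h3l h4l
    have h5 : ⟪H u, H u⟫ = ‖H u‖ ^ 2 := real_inner_self_eq_norm_sq (H u)
    have h6 : 0 < ‖H u‖ := norm_pos_iff.mpr h0
    have hprod : ⟪H u, u⟫ * ⟪H (H u), H u⟫ ≤ (2 * ‖u‖ ^ 2) * (2 * ‖H u‖ ^ 2) :=
      mul_le_mul h3 h4 (le_trans (by positivity) h4l) (by positivity)
    have hx4 : ‖H u‖ ^ 2 * ‖H u‖ ^ 2 ≤ 4 * ‖u‖ ^ 2 * ‖H u‖ ^ 2 := by nlinarith [h2, h5, hprod]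
    have hsq : ‖H u‖ ^ 2 ≤ 4 * ‖u‖ ^ 2 := by
      have := pow_pos h6 2
      nlinarith [hx4]
    nlinarith [hsq, norm_nonneg u, norm_nonneg (H u)]

lemma grad_bound (hφ : HomogConvex n φ) :
    ∃ M : ℝ, 0 ≤ M ∧ ∀ ξ : EuclideanSpace ℝ (Fin n), ‖ξ‖ = 1 → ‖gradient φ ξ‖ ≤ M := by
  have hcont : ContinuousOn (gradient φ) (Metric.sphere (0 : EuclideanSpace ℝ (Fin n)) 1) := by
    intro ξ hξ
    have hξ0 : ξ ≠ 0 := by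
      have h1 : ‖ξ‖ = 1 := by simpa [mem_sphere_zero_iff_norm] using hξ
      exact fun h => by simp [h] at h1
    exact ((gradient_contDiffAt hφ hξ0).continuousAt).continuousWithinAt
  obtain ⟨M, hM⟩ :=
    (isCompact_sphere (0 : EuclideanSpace ℝ (Fin n)) 1).exists_bound_of_continuousOn hcont
  refine ⟨max M 0, le_max_right _ _, fun ξ h => ?_⟩
  exact le_trans (hM ξ (by simpa [mem_sphere_zero_iff_norm] using h)) (le_max_left _ _)

noncomputable def projE (y : EuclideanSpace ℝ (Fin (n + 1))) : EuclideanSpace ℝ (Fin n) :=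
  (WithLp.equiv 2 (Fin n → ℝ)).symm (fun j => y (Fin.castSucc j))

lemma projE_apply (y : EuclideanSpace ℝ (Fin (n + 1))) (j : Fin n) :
    projE y j = y (Fin.castSucc j) := rfl

lemma projE_sub (x y : EuclideanSpace ℝ (Fin (n + 1))) :
    projE (x - y) = projE x - projE y := by
  ext j
  simp [projE_apply]

lemma inner_split (y z : EuclideanSpace ℝ (Fin (n + 1))) :
    ⟪y, z⟫ = ⟪projE y, projE z⟫ + y (Fin.last n) * z (Fin.last n) := by
  simp only [PiLp.inner_apply, RCLike.inner_apply, conj_trivial, projE_apply]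
  rw [Fin.sum_univ_castSucc]
  ring

lemma inner_projE_left (u : EuclideanSpace ℝ (Fin n)) (y : EuclideanSpace ℝ (Fin (n + 1))) :
    ⟪u, projE y⟫ = ∑ j, u j * y (Fin.castSucc j) := by
  simp [PiLp.inner_apply, RCLike.inner_apply, projE_apply]
  exact Finset.sum_congr rfl fun _ _ => mul_comm _ _

end GCTaux

set_option maxHeartbeats 1000000 in
/-- Lemma 4.6: transversal case for general cones.  With `γ_i = Hess φ(η) α_i`,
`Ṽ = span γ_i`, `V̄ = Ṽ^⊥ ⊕ ℝ e_{n+1}` and `W = V̄^⊥`, if `η ∈ L ∩ S^{n-1}` makes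
angle `< π/2 - K^{-2}` with `V⁻`, then `Ang(V, W) ≥ c K^{-4}`. -/
theorem general_cone_transversal (n m : ℕ) (hn : 2 ≤ n) (hm1 : 1 ≤ m) (hm2 : m ≤ n)
    (φ : EuclideanSpace ℝ (Fin n) → ℝ) (hφ : HomogConvex n φ) :
    ∃ c C : ℝ, 0 < c ∧ 0 < C ∧ ∀ K : ℝ, C ≤ K →
      ∀ (α : Fin (n + 1 - m) → EuclideanSpace ℝ (Fin n)) (a : Fin (n + 1 - m) → ℝ),
        LinearIndependent ℝ α →
        ∀ η : EuclideanSpace ℝ (Fin n), ‖η‖ = 1 →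
          (∀ i, ⟪α i, gradient φ η⟫ = a i) →
          angInf η {v : EuclideanSpace ℝ (Fin n) | ∀ i, ⟪α i, v⟫ = 0} <
            Real.pi / 2 - (K ^ 2)⁻¹ →
          ∀ v w : EuclideanSpace ℝ (Fin (n + 1)),
            (∀ i, (∑ j : Fin n, α i j * v (Fin.castSucc j)) + a i * v (Fin.last n) = 0) →
            v ≠ 0 →
            (∀ z : EuclideanSpace ℝ (Fin (n + 1)),
              (WithLp.equiv 2 (Fin n → ℝ)).symm (fun j => z (Fin.castSucc j)) ∈
                (Submodule.span ℝ
                  (Set.range fun i => fderiv ℝ (gradient φ) η (α i)))ᗮ →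
              ⟪w, z⟫ = 0) →
            w ≠ 0 →
            c * (K ^ 4)⁻¹ ≤ ang v w := by
  classical
  obtain ⟨M, hM0, hM⟩ := GCTaux.grad_bound hφ
  set B : ℝ := 1 + M with hBdef
  have hBpos : (0 : ℝ) < B := by rw [hBdef]; linarith only [hM0]
  have hB1 : (1 : ℝ) ≤ B := by rw [hBdef]; linarith only [hM0]
  refine ⟨(32 * B)⁻¹, 1, by positivity, one_pos, ?_⟩
  intro K hK1 α a hα η hη ha hang v w hv hv0 hw hw0
  set c : ℝ := (32 * B)⁻¹ with hcdef
  have hcpos : 0 < c := by positivity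
  have hKpos : (0 : ℝ) < K := lt_of_lt_of_le one_pos hK1
  have hK4 : (0 : ℝ) < K ^ 4 := by positivity
  have hK2 : (0 : ℝ) < K ^ 2 := by positivity
  have hK41 : (1 : ℝ) ≤ K ^ 4 := one_le_pow₀ hK1
  have hK21 : (1 : ℝ) ≤ K ^ 2 := one_le_pow₀ hK1
  have hK4inv : (K ^ 4)⁻¹ ≤ 1 := inv_le_one_of_one_le₀ hK41
  have hK2inv1 : (K ^ 2)⁻¹ ≤ 1 := inv_le_one_of_one_le₀ hK21
  have hK2invpos : 0 < (K ^ 2)⁻¹ := by positivity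
  set τ : ℝ := c * (K ^ 4)⁻¹ with hτdef
  have hτpos : 0 < τ := by positivity
  have hcB : B * c = 1 / 32 := by
    rw [hcdef]; field_simp
  have hc32 : c ≤ 1 / 32 := by
    rw [hcdef]
    rw [show (1 : ℝ) / 32 = (32 : ℝ)⁻¹ by norm_num]
    apply inv_anti₀ (by norm_num)
    linarith only [hB1]
  have hτc : τ ≤ c := by
    rw [hτdef]
    nlinarith only [hK4inv, hcpos]
  have hτpi : τ ≤ π := by
    linarith only [Real.pi_gt_three, hτc, hc32]
  -- contradiction setup
  by_contra hcon
  push_neg at hcon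
  set r : ℝ := ⟪v, w⟫ / (‖v‖ * ‖w‖) with hrdef
  have hrabs : |r| ≤ 1 := abs_real_inner_div_norm_mul_norm_le_one v w
  have hrlow : -1 ≤ r := (abs_le.mp hrabs).1
  have hrhigh : r ≤ 1 := (abs_le.mp hrabs).2
  have harc : Real.arccos r < τ := hcon
  have hrgt : Real.cos τ < r := by
    have h1 : Real.cos τ < Real.cos (Real.arccos r) :=
      Real.strictAntiOn_cos ⟨Real.arccos_nonneg r, Real.arccos_le_pi r⟩
        ⟨hτpos.le, hτpi⟩ harc
    rwa [Real.cos_arccos hrlow hrhigh] at h1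
  have hr2 : 1 - τ ^ 2 / 2 < r := lt_of_le_of_lt Real.one_sub_sq_div_two_le_cos hrgt
  -- normalization
  have hvn : (0 : ℝ) < ‖v‖ := norm_pos_iff.mpr hv0
  have hwn : (0 : ℝ) < ‖w‖ := norm_pos_iff.mpr hw0
  set vv := ‖v‖⁻¹ • v with hvvdef
  set ww := ‖w‖⁻¹ • w with hwwdef
  have hvv1 : ‖vv‖ = 1 := by
    rw [hvvdef, norm_smul, Real.norm_eq_abs, abs_of_pos (inv_pos.mpr hvn)]
    field_simp
  have hww1 : ‖ww‖ = 1 := by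
    rw [hwwdef, norm_smul, Real.norm_eq_abs, abs_of_pos (inv_pos.mpr hwn)]
    field_simp
  have hrvw : r = ⟪vv, ww⟫ := by
    rw [hvvdef, hwwdef, real_inner_smul_left, real_inner_smul_right, hrdef]
    field_simp
  set H := fderiv ℝ (gradient φ) η with hHdef
  have hη0 : η ≠ 0 := fun h => by simp [h] at hη
  set G := gradient φ η with hGdef
  have hGn : ‖G‖ ≤ M := hM η hη
  set v' := GCTaux.projE vv with hv'def
  set w' := GCTaux.projE ww with hw'def
  set s : ℝ := vv (Fin.last n) with hsdef
  -- w facts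
  have hwz : ∀ z : EuclideanSpace ℝ (Fin (n + 1)),
      GCTaux.projE z ∈ (Submodule.span ℝ (Set.range fun i => H (α i)))ᗮ → ⟪ww, z⟫ = 0 := by
    intro z hz
    rw [hwwdef, real_inner_smul_left, hw z hz, mul_zero]
  have hproj0 : GCTaux.projE (EuclideanSpace.single (Fin.last n) (1 : ℝ))
      = (0 : EuclideanSpace ℝ (Fin n)) := by
    ext j
    have hne : Fin.castSucc j ≠ Fin.last n := (Fin.castSucc_lt_last j).ne
    simp [GCTaux.projE_apply, EuclideanSpace.single_apply, hne]
  have hwlast : ww (Fin.last n) = 0 := by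
    have hz : ⟪ww, EuclideanSpace.single (Fin.last n) (1 : ℝ)⟫ = 0 :=
      hwz _ (by rw [hproj0]; exact Submodule.zero_mem _)
    have hsp := GCTaux.inner_split ww (EuclideanSpace.single (Fin.last n) (1 : ℝ))
    rw [hz, hproj0, inner_zero_right] at hsp
    simpa [EuclideanSpace.single_apply] using hsp.symm
  have hw'T : w' ∈ Submodule.span ℝ (Set.range fun i => H (α i)) := by
    rw [← Submodule.orthogonal_orthogonal (Submodule.span ℝ (Set.range fun i => H (α i)))]
    rw [Submodule.mem_orthogonal]
    intro u hu
    set z : EuclideanSpace ℝ (Fin (n + 1)) :=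
      (WithLp.equiv 2 (Fin (n + 1) → ℝ)).symm (Fin.snoc (fun j => u j) (0 : ℝ)) with hzdef
    have hz1 : GCTaux.projE z = u := by
      ext j
      rw [GCTaux.projE_apply]
      show (Fin.snoc (fun j => u j) (0 : ℝ) : Fin (n + 1) → ℝ) (Fin.castSucc j) = u j
      rw [Fin.snoc_castSucc]
    have hz2 : z (Fin.last n) = 0 := by
      show (Fin.snoc (fun j => u j) (0 : ℝ) : Fin (n + 1) → ℝ) (Fin.last n) = 0
      rw [Fin.snoc_last]
    have h0 := hwz z (by rw [hz1]; exact hu)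
    have hsp := GCTaux.inner_split ww z
    rw [h0, hz2, mul_zero, add_zero] at hsp
    rw [hz1] at hsp
    rw [real_inner_comm]
    exact hsp.symm
  have hmap : Submodule.span ℝ (Set.range fun i => H (α i)) =
      Submodule.map (H : EuclideanSpace ℝ (Fin n) →ₗ[ℝ] EuclideanSpace ℝ (Fin n))
        (Submodule.span ℝ (Set.range α)) := by
    rw [Submodule.map_span]
    congr 1
    rw [← Set.range_comp]
    rfl
  rw [hmap] at hw'T
  obtain ⟨β, hβmem, hβeq⟩ := Submodule.mem_map.mp hw'T
  have hβeq : H β = w' := hβeq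
  have hβorth : ∀ x : EuclideanSpace ℝ (Fin n), (∀ i, ⟪α i, x⟫ = 0) → ⟪β, x⟫ = 0 := by
    intro x hx
    refine Submodule.span_induction ?_ ?_ ?_ ?_ hβmem
    · rintro y ⟨i, rfl⟩
      exact hx i
    · exact inner_zero_left x
    · intro y z hy hz h1 h2
      rw [inner_add_left, h1, h2, add_zero]
    · intro d y hy h1
      rw [real_inner_smul_left, h1, mul_zero]
  -- v facts
  have hvk : ∀ k, vv k = ‖v‖⁻¹ * v k := by
    intro k
    rw [hvvdef]
    rfl
  have hpα : ∀ i, ⟪α i, v' + s • G⟫ = 0 := by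
    intro i
    have h1 : ⟪α i, v'⟫ = ∑ j, α i j * vv (Fin.castSucc j) :=
      GCTaux.inner_projE_left (α i) vv
    have h2 := hv i
    have h3 : ∑ j, α i j * vv (Fin.castSucc j)
        = ‖v‖⁻¹ * ∑ j, α i j * v (Fin.castSucc j) := by
      rw [Finset.mul_sum]
      refine Finset.sum_congr rfl fun j _ => ?_
      rw [hvk]; ring
    rw [inner_add_right, h1, real_inner_smul_right, ha i, h3, hsdef, hvk]
    have : ‖v‖⁻¹ * (∑ j, α i j * v (Fin.castSucc j)) + ‖v‖⁻¹ * v (Fin.last n) * a i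
        = ‖v‖⁻¹ * ((∑ j, α i j * v (Fin.castSucc j)) + a i * v (Fin.last n)) := by ring
    rw [this, h2, mul_zero]
  set p := v' + s • G with hpdef
  -- distance bounds
  have hprojsub : GCTaux.projE (vv - ww) = v' - w' := GCTaux.projE_sub vv ww
  have hd1 : ‖vv - ww‖ ^ 2 = ‖v' - w'‖ ^ 2 + s * s := by
    have h := GCTaux.inner_split (vv - ww) (vv - ww)
    rw [hprojsub] at h
    rw [real_inner_self_eq_norm_sq, real_inner_self_eq_norm_sq] at h
    have hlast : (vv - ww) (Fin.last n) = s := by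
      have : (vv - ww) (Fin.last n) = vv (Fin.last n) - ww (Fin.last n) := rfl
      rw [this, hwlast, sub_zero, hsdef]
    rw [hlast] at h
    exact h
  have hnormw' : ‖w'‖ = 1 := by
    have h := GCTaux.inner_split ww ww
    rw [hwlast, mul_zero, add_zero, real_inner_self_eq_norm_sq,
      real_inner_self_eq_norm_sq, hww1] at h
    nlinarith only [h, norm_nonneg w']

  have hdistlt : ‖vv - ww‖ ^ 2 < τ ^ 2 := by
    have h := norm_sub_sq_real vv ww
    rw [hvv1, hww1, ← hrvw] at h
    rw [h]; linarith only [hr2]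
  have hslt : |s| ≤ τ := by
    nlinarith only [hd1, hdistlt, sq_nonneg ‖v' - w'‖, abs_nonneg s, sq_abs s, hτpos]
  have hv'w' : ‖v' - w'‖ ≤ τ := by
    nlinarith only [hd1, hdistlt, mul_self_nonneg s, norm_nonneg (v' - w'), hτpos]
  set δ : ℝ := B * τ with hδdef
  have hδval : δ = (K ^ 4)⁻¹ / 32 := by
    rw [hδdef, hτdef, ← mul_assoc, hcB]; ring
  have hδpos : 0 < δ := by rw [hδdef]; positivity
  have hδle : δ ≤ 1 / 32 := by
    rw [hδval]; linarith only [hK4inv]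
  have hpHβ : ‖p - H β‖ ≤ δ := by
    have h1 : p - H β = (v' - w') + s • G := by
      rw [hpdef, hβeq]; abel
    rw [h1]
    calc ‖(v' - w') + s • G‖ ≤ ‖v' - w'‖ + ‖s • G‖ := norm_add_le _ _
      _ = ‖v' - w'‖ + |s| * ‖G‖ := by rw [norm_smul, Real.norm_eq_abs]
      _ ≤ τ + τ * M := by
          have h2 : |s| * ‖G‖ ≤ τ * M :=
            mul_le_mul hslt hGn (norm_nonneg G) hτpos.le
          linarith only [hv'w', h2]
      _ = B * τ := by rw [hBdef]; ring
  have hHβ1 : ‖H β‖ = 1 := by rw [hβeq]; exact hnormw'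
  -- Hessian facts
  have hsym : ∀ u x : EuclideanSpace ℝ (Fin n), ⟪H u, x⟫ = ⟪u, H x⟫ :=
    fun u x => GCTaux.hess_symm hφ hη0 u x
  have hself : H η = 0 := GCTaux.hess_self hφ hη0
  have hlow : ∀ u : EuclideanSpace ℝ (Fin n), ⟪η, u⟫ = 0 →
      (1 / 2) * ‖u‖ ^ 2 ≤ ⟪H u, u⟫ := fun u hu => (GCTaux.hess_form hφ hη u hu).1
  -- β decomposition
  set t : ℝ := ⟪β, η⟫ with htdef
  set βp := β - t • η with hβpdef
  have hβdecomp : β = t • η + βp := by rw [hβpdef]; abel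
  have hβpη : ⟪η, βp⟫ = 0 := by
    rw [hβpdef, inner_sub_right, real_inner_smul_right, real_inner_self_eq_norm_sq, hη]
    rw [htdef, real_inner_comm]
    ring
  have hHβp : H βp = H β := by
    rw [hβpdef, map_sub, ContinuousLinearMap.map_smul, hself, smul_zero, sub_zero]
  have hHβη : ⟪H β, η⟫ = 0 := by rw [hsym, hself, inner_zero_right]
  have hpβ : ⟪β, p⟫ = 0 := hβorth p hpα
  have hform_β : ⟪H β, β⟫ ≤ δ * ‖β‖ := by
    have h1 : ⟪H β, β⟫ = ⟪H β - p, β⟫ + ⟪p, β⟫ := by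
      rw [inner_sub_left]; ring
    have h2 : ⟪p, β⟫ = 0 := by rw [real_inner_comm]; exact hpβ
    rw [h1, h2, add_zero]
    calc ⟪H β - p, β⟫ ≤ ‖H β - p‖ * ‖β‖ := real_inner_le_norm _ _
      _ ≤ δ * ‖β‖ := by
          have h2 : ‖H β - p‖ ≤ δ := by rw [norm_sub_rev]; exact hpHβ
          exact mul_le_mul_of_nonneg_right h2 (norm_nonneg β)
  have hβp_sq : ‖βp‖ ^ 2 ≤ 2 * δ * ‖β‖ := by
    have h1 := hlow βp hβpη
    have h2 : ⟪H βp, βp⟫ = ⟪H β, β⟫ := by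
      rw [hHβp, hβpdef, inner_sub_right, real_inner_smul_right, hHβη, mul_zero, sub_zero]
    rw [h2] at h1
    nlinarith only [h1, hform_β]
  have hβp_low : 1 ≤ 2 * ‖βp‖ := by
    have h1 := GCTaux.hess_op_bound hφ hη hβpη
    rw [← hHdef, hHβp, hHβ1] at h1
    exact h1
  have hβ_big : 1 ≤ 8 * δ * ‖β‖ := by nlinarith only [hβp_sq, hβp_low, norm_nonneg βp]
  have hβpos : 0 < ‖β‖ := by
    by_contra hb
    push_neg at hb
    nlinarith only [hβ_big, hδpos, hb]
  -- p is nonzero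
  have hpnorm : 1 - δ ≤ ‖p‖ := by
    have h1 : ‖H β‖ ≤ ‖p‖ + ‖H β - p‖ := by
      calc ‖H β‖ = ‖p + (H β - p)‖ := by rw [add_sub_cancel]
        _ ≤ ‖p‖ + ‖H β - p‖ := norm_add_le _ _
    rw [hHβ1] at h1
    have h2 : ‖H β - p‖ ≤ δ := by rw [norm_sub_rev]; exact hpHβ
    linarith only [h1, h2]
  have hp0 : p ≠ 0 := by
    intro h
    rw [h, norm_zero] at hpnorm
    linarith only [hpnorm, hδle]
  -- extract low-angle element
  have hSne : {θ : ℝ | ∃ x ∈ {y : EuclideanSpace ℝ (Fin n) | ∀ i, ⟪α i, y⟫ = 0},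
      x ≠ 0 ∧ θ = ang η x}.Nonempty := ⟨ang η p, p, hpα, hp0, rfl⟩
  obtain ⟨θ, hθmem, hθlt⟩ := exists_lt_of_csInf_lt hSne hang
  obtain ⟨q0, hq0mem, hq00, rfl⟩ := hθmem
  have hq0n : 0 < ‖q0‖ := norm_pos_iff.mpr hq00
  set X : ℝ := ⟪η, q0⟫ / (‖η‖ * ‖q0‖) with hXdef
  have hXabs : |X| ≤ 1 := abs_real_inner_div_norm_mul_norm_le_one η q0
  have hmem1 : ang η q0 ∈ Set.Icc 0 π := ⟨Real.arccos_nonneg _, Real.arccos_le_pi _⟩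
  have hmem2 : π / 2 - (K ^ 2)⁻¹ ∈ Set.Icc 0 π := by
    constructor
    · linarith only [Real.pi_gt_three, hK2inv1]
    · linarith only [Real.pi_pos, hK2invpos]
  have hcos1 : Real.cos (π / 2 - (K ^ 2)⁻¹) < Real.cos (ang η q0) :=
    Real.strictAntiOn_cos hmem1 hmem2 hθlt
  rw [Real.cos_pi_div_two_sub] at hcos1
  have hcosang : Real.cos (ang η q0) = X :=
    Real.cos_arccos (abs_le.mp hXabs).1 (abs_le.mp hXabs).2
  rw [hcosang] at hcos1
  set σ : ℝ := Real.sin ((K ^ 2)⁻¹) with hσdef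
  have hσlow : 3 / 4 * (K ^ 2)⁻¹ ≤ σ := by
    have h := Real.sin_gt_sub_cube hK2invpos
    have hx3 : ((K ^ 2)⁻¹) ^ 3 ≤ (K ^ 2)⁻¹ := by
      calc ((K ^ 2)⁻¹) ^ 3 ≤ ((K ^ 2)⁻¹) ^ 1 :=
        pow_le_pow_of_le_one hK2invpos.le hK2inv1 (by norm_num)
      _ = (K ^ 2)⁻¹ := pow_one _
    rw [hσdef]
    linarith only [h, hx3, hK2invpos]
  have hσpos : 0 < σ := lt_of_lt_of_le (by positivity) hσlow
  have hσ1 : σ ≤ 1 := Real.sin_le_one _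
  have hXq : σ * ‖q0‖ < ⟪η, q0⟫ := by
    rw [hXdef, hη, one_mul] at hcos1
    exact (lt_div_iff₀ hq0n).mp hcos1
  have hβq : ⟪β, q0⟫ = 0 := hβorth q0 hq0mem
  have hdecomp : t * ⟪η, q0⟫ + ⟪βp, q0⟫ = 0 := by
    rw [hβdecomp, inner_add_left, real_inner_smul_left] at hβq
    linarith only [hβq]
  have htabs : |t| * σ ≤ ‖βp‖ := by
    have hηq0 : 0 ≤ ⟪η, q0⟫ := le_trans (by positivity) hXq.le
    have h1 : |t| * (σ * ‖q0‖) ≤ |t| * ⟪η, q0⟫ :=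
      mul_le_mul_of_nonneg_left hXq.le (abs_nonneg t)
    have h2 : |t| * ⟪η, q0⟫ = |t * ⟪η, q0⟫| := by
      rw [abs_mul, abs_of_nonneg hηq0]
    have h3 : |t * ⟪η, q0⟫| = |⟪βp, q0⟫| := by
      rw [show t * ⟪η, q0⟫ = -⟪βp, q0⟫ by linarith only [hdecomp], abs_neg]
    have h4 : |⟪βp, q0⟫| ≤ ‖βp‖ * ‖q0‖ := abs_real_inner_le_norm _ _
    have h5 : |t| * σ * ‖q0‖ ≤ ‖βp‖ * ‖q0‖ := by
      calc |t| * σ * ‖q0‖ = |t| * (σ * ‖q0‖) := by ring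
        _ ≤ |t| * ⟪η, q0⟫ := h1
        _ = |⟪βp, q0⟫| := by rw [h2, h3]
        _ ≤ ‖βp‖ * ‖q0‖ := h4
    exact le_of_mul_le_mul_right h5 hq0n
  have hβnorm_le : ‖β‖ ≤ |t| + ‖βp‖ := by
    calc ‖β‖ = ‖t • η + βp‖ := by rw [← hβdecomp]
      _ ≤ ‖t • η‖ + ‖βp‖ := norm_add_le _ _
      _ = |t| + ‖βp‖ := by rw [norm_smul, Real.norm_eq_abs, hη, mul_one]
  have hfinal1 : σ * ‖β‖ ≤ 2 * ‖βp‖ := by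
    have h1 := mul_le_mul_of_nonneg_left hβnorm_le hσpos.le
    nlinarith only [h1, htabs, hσ1, norm_nonneg βp, hσpos, abs_nonneg t]
  have hfinal2 : σ ^ 2 * ‖β‖ ≤ 8 * δ := by
    have hsq : (σ * ‖β‖) ^ 2 ≤ 4 * ‖βp‖ ^ 2 := by
      nlinarith only [hfinal1, mul_nonneg hσpos.le (norm_nonneg β), norm_nonneg βp]
    have h2 : σ ^ 2 * ‖β‖ * ‖β‖ ≤ 8 * δ * ‖β‖ := by nlinarith only [hsq, hβp_sq, hβpos]
    exact le_of_mul_le_mul_right h2 hβpos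
  have hfinal3 : σ ^ 2 ≤ 64 * δ ^ 2 := by
    have h1 : σ ^ 2 * 1 ≤ σ ^ 2 * (8 * δ * ‖β‖) :=
      mul_le_mul_of_nonneg_left hβ_big (sq_nonneg σ)
    have h3 : (8 * δ) * (σ ^ 2 * ‖β‖) ≤ (8 * δ) * (8 * δ) :=
      mul_le_mul_of_nonneg_left hfinal2 (by positivity)
    nlinarith only [h1, h3]
  have hσδ : σ ≤ 8 * δ := by nlinarith only [hfinal3, hσpos, hδpos]
  have hK42 : (K ^ 4)⁻¹ ≤ (K ^ 2)⁻¹ := by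
    apply inv_anti₀ hK2
    nlinarith only [hK21, hKpos]
  rw [hδval] at hσδ
  nlinarith only [hσlow, hσδ, hK2invpos, hK42]
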